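/- Let g: K∖O → A be Borel measurable with g(x) ∈ A(x) for every x ∈ K∖O, and define the Markov kernel κ_g from X to X by κ_g(x,·) := Q(·|x, g(x)) for x ∈ K∖O and κ_g(x,·) := δ_x (the Dirac measure at x) for x ∈ O ∪ (X∖K). Then for every x ∈ X the hitting probability of the κ_g-chain satisfies P_x^{κ_g}(τ < τ' and τ < ∞) ≤ v*(x), where v* := lim_{n→∞} v_n is the pointwise limit of the value-iteration functions. -/

import Mathlib

open scoped Classical

open MeasureTheory Set Filter Topology

/-- The dynamic programming operator:
`Tu(x) = 1_O(x) + 1_{K∖O}(x) ⬝ sup_{a ∈ A(x)} ∫ 1_K(y) u(y) Q(dy|x,a)`. -/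
noncomputable def dpOp {X A : Type*} [MeasurableSpace X] (O K : Set X)
    (Amap : X → Set A) (Q : X → A → Measure X) (u : X → ℝ) : X → ℝ := fun x =>
  O.indicator (1 : X → ℝ) x +
    (K \ O).indicator
      (fun x' => sSup ((fun a => ∫ y, K.indicator u y ∂(Q x' a)) '' Amap x')) x


/-- The value-iteration functions: `v₀ = 1_O` and `v_{n+1} = T v_n`. -/
noncomputable def viter {X A : Type*} [MeasurableSpace X] (O K : Set X)
    (Amap : X → Set A) (Q : X → A → Measure X) : ℕ → X → ℝ
  | 0 => O.indicator (1 : X → ℝ)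
  | n + 1 => dpOp O K Amap Q (viter O K Amap Q n)


/-- First hitting time of the set `S` by the sequence `ω`, valued in `ℕ∞` (`⊤` if never hit). -/
noncomputable def hitTime {X : Type*} (S : Set X) (ω : ℕ → X) : ℕ∞ :=
  sInf ((fun t : ℕ => (t : ℕ∞)) '' {t : ℕ | ω t ∈ S})

/-- `P x` is the law on `X^ℕ` of the canonical Markov chain started at `x` with one-step
transition kernel `κ` (the Ionescu–Tulcea measure). -/
def IsMarkovChainLaw {X : Type*} [MeasurableSpace X] (κ : X → Measure X)
    (P : X → Measure (ℕ → X)) : Prop :=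
  (∀ x, IsProbabilityMeasure (P x)) ∧
  (∀ x, P x {ω | ω 0 = x} = 1) ∧
  (∀ x (n : ℕ) (E : Set (ℕ → X)),
    MeasurableSet[MeasurableSpace.comap (fun (ω : ℕ → X) (i : Fin (n + 1)) => ω (i : ℕ))
      inferInstance] E →
    ∀ f : X → ENNReal, Measurable f →
      ∫⁻ ω in E, f (ω (n + 1)) ∂(P x) = ∫⁻ ω in E, ∫⁻ y, f y ∂(κ (ω n)) ∂(P x))


/-! The event `τ < τ'`, `τ < ∞` is covered by the events "the chain is in `O` at time `t` and in
`K ∖ O` before". By the Markov property, the probability that this happens for some `t ≤ n` is at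
most `w n x` for every sequence `w` with `1_O ≤ w 0` and `1_O + 1_{K∖O} ⬝ κ w n ≤ w (n + 1)`.
The value iterates `v_n` form such a sequence, since `g x` is one of the actions over which `T`
takes its supremum; letting `n → ∞` gives the bound `v*`.

For this, `v_n` must be measurable. By the strong Feller property, `(x, a) ↦ ∫ 1_K v_n dQ(x, a)`
is continuous on the graph of `A`; as `A` is compact-valued and upper hemicontinuous, Berge's
maximum theorem makes its supremum over `A(x)` upper semicontinuous on `K ∖ O`. -/

open scoped ENNReal

section HittingTime

variable {X : Type*} {S : Set X} {ω : ℕ → X}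

lemma hitTime_le_of_mem {t : ℕ} (h : ω t ∈ S) : hitTime S ω ≤ t := sInf_le ⟨t, h, rfl⟩

lemma exists_mem_hitTime_eq (h : hitTime S ω < ⊤) : ∃ t, ω t ∈ S ∧ hitTime S ω = t := by
  have hne : {t : ℕ | ω t ∈ S}.Nonempty := by
    by_contra! hempty
    simp [hitTime, hempty] at h
  obtain ⟨t, ht, heq⟩ := csInf_mem (hne.image fun t : ℕ => (t : ℕ∞))
  exact ⟨t, ht, heq.symm⟩

end HittingTime

def staysIn {X : Type*} (S : Set X) (m : ℕ) : Set (ℕ → X) := {ω | ∀ s < m, ω s ∈ S}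

def reachesAt {X : Type*} (O S : Set X) (t : ℕ) : Set (ℕ → X) := {ω | ω t ∈ O} ∩ staysIn S t

lemma staysIn_zero {X : Type*} (S : Set X) : staysIn S 0 = univ := by simp [staysIn]

lemma staysIn_succ {X : Type*} (S : Set X) (m : ℕ) :
    staysIn S (m + 1) = {ω | ω m ∈ S} ∩ staysIn S m := by
  ext ω
  exact Nat.forall_lt_succ_right.trans and_comm

lemma hitEvent_subset_iUnion_reachesAt {X : Type*} (O K : Set X) :
    {ω : ℕ → X | hitTime O ω < hitTime Kᶜ ω ∧ hitTime O ω < ⊤} ⊆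
      ⋃ t, reachesAt O (K \ O) t := by
  rintro ω ⟨hbefore, hfinite⟩
  obtain ⟨t, ht, hτ⟩ := exists_mem_hitTime_eq hfinite
  refine mem_iUnion.2 ⟨t, ht, fun s hs => ⟨not_not.1 fun hsK => ?_, fun hsO => ?_⟩⟩
  · have : (t : ℕ∞) < s := hτ ▸ hbefore.trans_le (hitTime_le_of_mem (S := Kᶜ) hsK)
    exact absurd (by exact_mod_cast this : t < s) (by omega)
  · have : (t : ℕ∞) ≤ s := hτ ▸ hitTime_le_of_mem hsO
    exact absurd (by exact_mod_cast this : t ≤ s) (by omega)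

section MarkovChain

variable {X : Type*} [MeasurableSpace X] {O S : Set X} {κ : X → Measure X}
  {P : X → Measure (ℕ → X)}

lemma measurableSet_staysIn_comap (hS : MeasurableSet S) (n : ℕ) :
    MeasurableSet[MeasurableSpace.comap (fun (ω : ℕ → X) (i : Fin (n + 1)) => ω (i : ℕ))
      inferInstance] (staysIn S (n + 1)) :=
  ⟨univ.pi fun _ => S, .univ_pi fun _ => hS, by ext ω; simp [staysIn, Fin.forall_iff]⟩

lemma measure_reachesAt_add_setLIntegral_le (hO : MeasurableSet O) (hS : MeasurableSet S)
    (hP : IsMarkovChainLaw κ P) (x : X) {f g : X → ℝ≥0∞} (hf : Measurable f)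
    (hfg : ∀ z, O.indicator 1 z + S.indicator (fun z => ∫⁻ y, f y ∂κ z) z ≤ g z) (m : ℕ) :
    P x (reachesAt O S m) + ∫⁻ ω in staysIn S (m + 1), f (ω (m + 1)) ∂P x ≤
      ∫⁻ ω in staysIn S m, g (ω m) ∂P x := by
  have hOm : MeasurableSet {ω : ℕ → X | ω m ∈ O} := measurable_pi_apply m hO
  have hSm : MeasurableSet {ω : ℕ → X | ω m ∈ S} := measurable_pi_apply m hS
  calc _ = ∫⁻ ω in staysIn S m, {ω | ω m ∈ O}.indicator 1 ω ∂P x +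
        ∫⁻ ω in staysIn S m, {ω | ω m ∈ S}.indicator (fun ω => ∫⁻ y, f y ∂κ (ω m)) ω ∂P x := by
        rw [hP.2.2 x m _ (measurableSet_staysIn_comap hS m) f hf, lintegral_indicator_one hOm,
          lintegral_indicator hSm, Measure.restrict_apply hOm, Measure.restrict_restrict hSm,
          staysIn_succ S m]
        rfl
    _ = ∫⁻ ω in staysIn S m,
          (O.indicator 1 (ω m) + S.indicator (fun z => ∫⁻ y, f y ∂κ z) (ω m)) ∂P x := by
        rw [← lintegral_add_left (measurable_one.indicator hOm)]
        rfl
    _ ≤ _ := lintegral_mono fun ω => hfg (ω m)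

def IsHittingSupersolution (O S : Set X) (κ : X → Measure X) (w : ℕ → X → ℝ≥0∞) : Prop :=
  (∀ n, Measurable (w n)) ∧ (∀ z, O.indicator 1 z ≤ w 0 z) ∧
    ∀ n z, O.indicator 1 z + S.indicator (fun z => ∫⁻ y, w n y ∂κ z) z ≤ w (n + 1) z

lemma sum_measure_reachesAt_le_setLIntegral (hO : MeasurableSet O) (hS : MeasurableSet S)
    (hP : IsMarkovChainLaw κ P) (x : X) {w : ℕ → X → ℝ≥0∞} (hw : IsHittingSupersolution O S κ w)
    (n m : ℕ) :
    ∑ i ∈ Finset.range (n + 1), P x (reachesAt O S (m + i)) ≤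
      ∫⁻ ω in staysIn S m, w n (ω m) ∂P x := by
  induction n generalizing m with
  | zero =>
    simpa using measure_reachesAt_add_setLIntegral_le hO hS hP x measurable_zero
      (fun z => by simpa using hw.2.1 z) m
  | succ n ih =>
    calc ∑ i ∈ Finset.range (n + 2), P x (reachesAt O S (m + i))
        = P x (reachesAt O S m) +
            ∑ i ∈ Finset.range (n + 1), P x (reachesAt O S (m + 1 + i)) := by
          rw [Finset.sum_range_succ', add_comm]
          simp only [add_zero, add_assoc, add_comm 1]
      _ ≤ P x (reachesAt O S m) + ∫⁻ ω in staysIn S (m + 1), w n (ω (m + 1)) ∂P x := by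
          gcongr
          exact ih (m + 1)
      _ ≤ _ := measure_reachesAt_add_setLIntegral_le hO hS hP x (hw.1 n) (hw.2.2 n) m

lemma sum_measure_reachesAt_le [MeasurableSingletonClass X] (hO : MeasurableSet O)
    (hS : MeasurableSet S) (hP : IsMarkovChainLaw κ P) (x : X) {w : ℕ → X → ℝ≥0∞}
    (hw : IsHittingSupersolution O S κ w) (n : ℕ) :
    ∑ t ∈ Finset.range (n + 1), P x (reachesAt O S t) ≤ w n x := by
  have := hP.1 x
  have hstart : ∀ᵐ ω ∂P x, ω 0 = x := by
    have hmeas : MeasurableSet {ω : ℕ → X | ω 0 = x} :=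
      (measurableSet_singleton x).preimage (measurable_pi_apply 0)
    rw [ae_iff_measure_eq hmeas.nullMeasurableSet, measure_univ]
    exact hP.2.1 x
  calc _ = ∑ i ∈ Finset.range (n + 1), P x (reachesAt O S (0 + i)) := by simp
    _ ≤ ∫⁻ ω in staysIn S 0, w n (ω 0) ∂P x :=
        sum_measure_reachesAt_le_setLIntegral hO hS hP x hw n 0
    _ = w n x := by
        rw [staysIn_zero, Measure.restrict_univ, lintegral_congr_ae (hstart.mono fun ω h => by
          rw [h]), lintegral_const, measure_univ, mul_one]

lemma measure_iUnion_reachesAt_le_of_tendsto [MeasurableSingletonClass X] (hO : MeasurableSet O)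
    (hS : MeasurableSet S) (hP : IsMarkovChainLaw κ P) (x : X) {w : ℕ → X → ℝ≥0∞}
    (hw : IsHittingSupersolution O S κ w) {L : ℝ≥0∞}
    (hL : Tendsto (fun n => w n x) atTop (𝓝 L)) :
    P x (⋃ t, reachesAt O S t) ≤ L :=
  (measure_iUnion_le _).trans <|
    le_of_tendsto_of_tendsto' ((ENNReal.tendsto_nat_tsum _).comp (tendsto_add_atTop_nat 1)) hL
      (sum_measure_reachesAt_le hO hS hP x hw)

end MarkovChain
section MaximumTheorem

variable {X A : Type*} [TopologicalSpace X] [TopologicalSpace A] {S : Set X}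
  {Amap : X → Set A} {F : X × A → ℝ}

lemma isCompact_image_slice (hF : ContinuousOn F {p | p.1 ∈ S ∧ p.2 ∈ Amap p.1}) {z : X}
    (hz : z ∈ S) (hcp : IsCompact (Amap z)) : IsCompact ((fun a => F (z, a)) '' Amap z) :=
  hcp.image_of_continuousOn <|
    hF.comp (Continuous.prodMk_right z).continuousOn fun _ ha => ⟨hz, ha⟩

/-- The upper half of Berge's maximum theorem. -/
lemma upperSemicontinuousOn_sSup_image (hne : ∀ x ∈ S, (Amap x).Nonempty)
    (hcp : ∀ x ∈ S, IsCompact (Amap x)) (huhc : UpperHemicontinuousOn Amap S)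
    (hF : ContinuousOn F {p | p.1 ∈ S ∧ p.2 ∈ Amap p.1}) :
    UpperSemicontinuousOn (fun x => sSup ((fun a => F (x, a)) '' Amap x)) S := by
  refine fun x₀ hx₀ c hc => ?_
  obtain ⟨U, hU, hUeq⟩ := continuousOn_iff'.mp hF (Iio c) isOpen_Iio
  have hslice : {x₀} ×ˢ Amap x₀ ⊆ U := by
    rintro ⟨z, a⟩ ⟨hz : z = x₀, ha⟩
    subst z
    have hlt : F (x₀, a) < c :=
      (le_csSup (isCompact_image_slice hF hx₀ (hcp x₀ hx₀)).bddAbove ⟨a, ha, rfl⟩).trans_lt hc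
    have hmem : (x₀, a) ∈ F ⁻¹' Iio c ∩ {p | p.1 ∈ S ∧ p.2 ∈ Amap p.1} := ⟨hlt, hx₀, ha⟩
    exact (hUeq ▸ hmem).1
  obtain ⟨V, W, hV, hW, hxV, hAW, hVW⟩ :=
    generalized_tube_lemma isCompact_singleton (hcp x₀ hx₀) hU hslice
  filter_upwards [self_mem_nhdsWithin, mem_nhdsWithin_of_mem_nhds (hV.mem_nhds (hxV rfl)),
    huhc.forall_isOpen x₀ hx₀ W hW hAW] with z hz hzV hzW
  obtain ⟨a, ha, hmax⟩ := (isCompact_image_slice hF hz (hcp z hz)).sSup_mem ((hne z hz).image _)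
  have hmem : (z, a) ∈ U ∩ {p | p.1 ∈ S ∧ p.2 ∈ Amap p.1} := ⟨hVW ⟨hzV, hzW ha⟩, hz, ha⟩
  rw [← hUeq] at hmem
  exact hmax ▸ hmem.1

end MaximumTheorem

lemma UpperSemicontinuousOn.measurable_indicator {X α : Type*} [TopologicalSpace X]
    [MeasurableSpace X] [OpensMeasurableSpace X] [LinearOrder α] [TopologicalSpace α]
    [OrderTopology α] [SecondCountableTopology α] [MeasurableSpace α] [BorelSpace α] [Zero α]
    {f : X → α} {s : Set X} (hf : UpperSemicontinuousOn f s) (hs : MeasurableSet s) :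
    Measurable (s.indicator f) := by
  refine measurable_of_restrict_of_restrict_compl hs ?_ ?_
  · convert (upperSemicontinuousOn_iff_restrict.2 hf).measurable using 1
    ext z
    exact indicator_of_mem z.2 f
  · convert measurable_const (a := (0 : α)) using 1
    ext z
    exact indicator_of_notMem z.2 f

lemma integral_mem_Icc_zero_one {X : Type*} [MeasurableSpace X] {μ : Measure X}
    [IsProbabilityMeasure μ] {f : X → ℝ} (hf : ∀ y, f y ∈ Icc 0 1) : ∫ y, f y ∂μ ∈ Icc 0 1 := by
  refine ⟨integral_nonneg fun y => (hf y).1, (le_abs_self _).trans ?_⟩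
  simpa using norm_integral_le_of_norm_le_const (μ := μ) (f := f) (C := 1)
    (ae_of_all _ fun y => (Real.norm_of_nonneg (hf y).1).trans_le (hf y).2)

lemma indicator_mem_Icc_zero_one {X : Type*} {u : X → ℝ} (hu : ∀ y, u y ∈ Icc 0 1) (K : Set X)
    (y : X) : K.indicator u y ∈ Icc 0 1 := by
  by_cases hy : y ∈ K <;> simp [hy, hu y]

section ValueIteration

variable {X A : Type*} [MeasurableSpace X] {O K : Set X} {Amap : X → Set A}
  {Q : X → A → Measure X} {u : X → ℝ} {z : X}

lemma dpOp_of_mem (hz : z ∈ O) : dpOp O K Amap Q u z = 1 := by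
  simp [dpOp, hz]

lemma dpOp_of_mem_diff (hz : z ∈ K \ O) :
    dpOp O K Amap Q u z = sSup ((fun a => ∫ y, K.indicator u y ∂Q z a) '' Amap z) := by
  simp [dpOp, hz, hz.2]

lemma dpOp_of_notMem (hOK : O ⊆ K) (hz : z ∉ K) : dpOp O K Amap Q u z = 0 := by
  simp [dpOp, hz, notMem_subset hOK hz]

lemma image_integral_subset_Icc
    (hQprob : ∀ x ∈ K \ O, ∀ a ∈ Amap x, IsProbabilityMeasure (Q x a)) (hu : ∀ y, u y ∈ Icc 0 1) (hz : z ∈ K \ O) :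
    (fun a => ∫ y, K.indicator u y ∂Q z a) '' Amap z ⊆ Icc 0 1 := by
  rintro _ ⟨a, ha, rfl⟩
  have := hQprob z hz a ha
  exact integral_mem_Icc_zero_one (indicator_mem_Icc_zero_one hu K)

lemma dpOp_mem_Icc (hQprob : ∀ x ∈ K \ O, ∀ a ∈ Amap x, IsProbabilityMeasure (Q x a))
    (hu : ∀ y, u y ∈ Icc 0 1) (z : X) : dpOp O K Amap Q u z ∈ Icc 0 1 := by
  by_cases hzO : z ∈ O
  · simp [dpOp_of_mem hzO]
  by_cases hz : z ∈ K \ O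
  · have hsub := image_integral_subset_Icc hQprob hu hz
    rw [dpOp_of_mem_diff hz]
    exact ⟨Real.sSup_nonneg fun b hb => (hsub hb).1,
      Real.sSup_le (fun b hb => (hsub hb).2) zero_le_one⟩
  · simp [dpOp, hzO, hz]

lemma measurable_dpOp [TopologicalSpace X] [OpensMeasurableSpace X] [TopologicalSpace A]
    (hO : MeasurableSet O) (hK : MeasurableSet K)
    (hAne : ∀ x ∈ K \ O, (Amap x).Nonempty) (hAcp : ∀ x ∈ K \ O, IsCompact (Amap x))
    (hAuh : UpperHemicontinuousOn Amap (K \ O))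
    (hF : ContinuousOn (fun p : X × A => ∫ y, K.indicator u y ∂Q p.1 p.2)
      {p | p.1 ∈ K \ O ∧ p.2 ∈ Amap p.1}) :
    Measurable (dpOp O K Amap Q u) :=
  (measurable_one.indicator hO).add <|
    (upperSemicontinuousOn_sSup_image hAne hAcp hAuh hF).measurable_indicator (hK.diff hO)

lemma viter_of_mem (hz : z ∈ O) : ∀ n, viter O K Amap Q n z = 1
  | 0 => by simp [viter, hz]
  | _ + 1 => dpOp_of_mem hz

lemma viter_of_notMem (hOK : O ⊆ K) (hz : z ∉ K) : ∀ n, viter O K Amap Q n z = 0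
  | 0 => by simp [viter, notMem_subset hOK hz]
  | _ + 1 => dpOp_of_notMem hOK hz

lemma viter_mem_Icc (hQprob : ∀ x ∈ K \ O, ∀ a ∈ Amap x, IsProbabilityMeasure (Q x a)) :
    ∀ n z, viter O K Amap Q n z ∈ Icc 0 1
  | 0, z => by by_cases hz : z ∈ O <;> simp [viter, hz]
  | n + 1, z => dpOp_mem_Icc hQprob (viter_mem_Icc hQprob n) z

lemma measurable_viter [TopologicalSpace X] [OpensMeasurableSpace X] [TopologicalSpace A]
    (hO : MeasurableSet O) (hK : MeasurableSet K)
    (hAne : ∀ x ∈ K \ O, (Amap x).Nonempty) (hAcp : ∀ x ∈ K \ O, IsCompact (Amap x))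
    (hAuh : UpperHemicontinuousOn Amap (K \ O))
    (hQprob : ∀ x ∈ K \ O, ∀ a ∈ Amap x, IsProbabilityMeasure (Q x a))
    (hQfeller : ∀ g : X → ℝ, Measurable g → (∃ C, ∀ y, |g y| ≤ C) →
      ContinuousOn (fun p : X × A => ∫ y, g y ∂(Q p.1 p.2)) {p | p.1 ∈ K \ O ∧ p.2 ∈ Amap p.1}) :
    ∀ n, Measurable (viter O K Amap Q n)
  | 0 => measurable_one.indicator hO
  | n + 1 =>
    have hv := indicator_mem_Icc_zero_one (viter_mem_Icc hQprob n) K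
    measurable_dpOp hO hK hAne hAcp hAuh <|
      hQfeller _ ((measurable_viter hO hK hAne hAcp hAuh hQprob hQfeller n).indicator hK)
        ⟨1, fun y => (abs_of_nonneg (hv y).1).trans_le (hv y).2⟩

lemma lintegral_ofReal_viter_le (hOK : O ⊆ K)
    (hQprob : ∀ x ∈ K \ O, ∀ a ∈ Amap x, IsProbabilityMeasure (Q x a)) {n : ℕ}
    (hmeas : Measurable (viter O K Amap Q n)) (hz : z ∈ K \ O) {a : A} (ha : a ∈ Amap z) :
    ∫⁻ y, ENNReal.ofReal (viter O K Amap Q n y) ∂Q z a ≤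
      ENNReal.ofReal (viter O K Amap Q (n + 1) z) := by
  have := hQprob z hz a ha
  set v := viter O K Amap Q n
  have hv := viter_mem_Icc hQprob n
  have hvK : K.indicator v = v :=
    indicator_eq_self.2 fun y hy => not_not.1 fun hyK => hy (viter_of_notMem hOK hyK n)
  have hint : Integrable v (Q z a) :=
    .of_bound hmeas.aestronglyMeasurable 1
      (ae_of_all _ fun y => (Real.norm_of_nonneg (hv y).1).trans_le (hv y).2)
  calc ∫⁻ y, ENNReal.ofReal (v y) ∂Q z a = ENNReal.ofReal (∫ y, K.indicator v y ∂Q z a) := by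
        rw [hvK, ofReal_integral_eq_lintegral_ofReal hint (ae_of_all _ fun y => (hv y).1)]
    _ ≤ ENNReal.ofReal (sSup ((fun a => ∫ y, K.indicator v y ∂Q z a) '' Amap z)) :=
        ENNReal.ofReal_le_ofReal <|
          le_csSup (bddAbove_Icc.mono (image_integral_subset_Icc hQprob hv hz)) ⟨a, ha, rfl⟩
    _ = ENNReal.ofReal (viter O K Amap Q (n + 1) z) := by
        rw [← dpOp_of_mem_diff hz]
        rfl

lemma indicator_add_lintegral_le_viter_succ (hOK : O ⊆ K)
    (hQprob : ∀ x ∈ K \ O, ∀ a ∈ Amap x, IsProbabilityMeasure (Q x a)) {n : ℕ}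
    (hmeas : Measurable (viter O K Amap Q n)) {g : X → A} (hgsel : ∀ x ∈ K \ O, g x ∈ Amap x)
    (z : X) :
    O.indicator 1 z + (K \ O).indicator (fun z => ∫⁻ y, ENNReal.ofReal (viter O K Amap Q n y)
      ∂(if z ∈ K \ O then Q z (g z) else Measure.dirac z)) z ≤
        ENNReal.ofReal (viter O K Amap Q (n + 1) z) := by
  by_cases hzO : z ∈ O
  · simp [hzO, viter_of_mem hzO]
  by_cases hz : z ∈ K \ O
  · rw [indicator_of_notMem hzO, indicator_of_mem hz, if_pos hz, zero_add]
    exact lintegral_ofReal_viter_le hOK hQprob hmeas hz (hgsel z hz)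
  · simp [hzO, hz]

end ValueIteration

theorem stmt6_general {X A : Type*}
    [TopologicalSpace X] [PolishSpace X] [MeasurableSpace X] [BorelSpace X]
    [TopologicalSpace A]
    (O K : Set X)
    (hmO : MeasurableSet O) (hmK : MeasurableSet K) (hOK : O ⊂ K)
    (Amap : X → Set A)
    (hAne : ∀ x ∈ K \ O, (Amap x).Nonempty)
    (hAcp : ∀ x ∈ K \ O, IsCompact (Amap x))
    -- upper hemicontinuity of `x ↦ A(x)` on `K ∖ O`
    (hAuh : ∀ x ∈ K \ O, ∀ U : Set A, IsOpen U → Amap x ⊆ U →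
      ∃ V : Set X, IsOpen V ∧ x ∈ V ∧ ∀ z ∈ (K \ O) ∩ V, Amap z ⊆ U)
    (Q : X → A → Measure X)
    (hQprob : ∀ x ∈ K \ O, ∀ a ∈ Amap x, IsProbabilityMeasure (Q x a))
    -- strong Feller property of `Q` on `𝕂`
    (hQfeller : ∀ g : X → ℝ, Measurable g → (∃ C, ∀ y, |g y| ≤ C) →
      ContinuousOn (fun p : X × A => ∫ y, g y ∂(Q p.1 p.2))
        {p : X × A | p.1 ∈ K \ O ∧ p.2 ∈ Amap p.1})
    -- a measurable selector `g` on `K ∖ O`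
    (g : X → A)
    (hgsel : ∀ x ∈ K \ O, g x ∈ Amap x)
    -- `P x` is the law of the Markov chain driven by the kernel `κ_g`
    (P : X → Measure (ℕ → X))
    (hP : IsMarkovChainLaw
      (fun x => if x ∈ K \ O then Q x (g x) else Measure.dirac x) P)
    -- `vstar` is the pointwise limit of the value-iteration functions
    (vstar : X → ℝ)
    (hvstar : ∀ x, Filter.Tendsto (fun n => viter O K Amap Q n x) Filter.atTop (nhds (vstar x))) :
    ∀ x, P x {ω | hitTime O ω < hitTime Kᶜ ω ∧ hitTime O ω < ⊤} ≤
      ENNReal.ofReal (vstar x) := by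
  intro x
  have hAuh' : UpperHemicontinuousOn Amap (K \ O) := .of_forall_isOpen fun z hz U hU hAU => by
    obtain ⟨V, hV, hzV, hVA⟩ := hAuh z hz U hU hAU
    exact mem_nhdsWithin.2 ⟨V, hV, hzV, fun y hy => hVA y ⟨hy.2, hy.1⟩⟩
  have hmeas := measurable_viter hmO hmK hAne hAcp hAuh' hQprob hQfeller
  have hsuper : IsHittingSupersolution O (K \ O)
      (fun x => if x ∈ K \ O then Q x (g x) else Measure.dirac x)
      (fun n z => ENNReal.ofReal (viter O K Amap Q n z)) :=
    ⟨fun n => (hmeas n).ennreal_ofReal, fun z => by by_cases hz : z ∈ O <;> simp [viter, hz],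
      fun n => indicator_add_lintegral_le_viter_succ hOK.subset hQprob (hmeas n) hgsel⟩
  calc P x {ω | hitTime O ω < hitTime Kᶜ ω ∧ hitTime O ω < ⊤}
      ≤ P x (⋃ t, reachesAt O (K \ O) t) := measure_mono (hitEvent_subset_iUnion_reachesAt O K)
    _ ≤ ENNReal.ofReal (vstar x) :=
        measure_iUnion_reachesAt_le_of_tendsto hmO (hmK.diff hmO) hP x hsuper
          ((ENNReal.continuous_ofReal.tendsto _).comp (hvstar x))

theorem stmt6 {X A : Type*}
    [TopologicalSpace X] [PolishSpace X] [MeasurableSpace X] [BorelSpace X]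
    [TopologicalSpace A] [PolishSpace A] [MeasurableSpace A] [BorelSpace A]
    (O K : Set X) (hOne : O.Nonempty) (hKne : K.Nonempty)
    (hmO : MeasurableSet O) (hmK : MeasurableSet K) (hOK : O ⊂ K)
    (Amap : X → Set A)
    (hAne : ∀ x ∈ K \ O, (Amap x).Nonempty)
    (hAcp : ∀ x ∈ K \ O, IsCompact (Amap x))
    -- upper hemicontinuity of `x ↦ A(x)` on `K ∖ O`
    (hAuh : ∀ x ∈ K \ O, ∀ U : Set A, IsOpen U → Amap x ⊆ U →
      ∃ V : Set X, IsOpen V ∧ x ∈ V ∧ ∀ z ∈ (K \ O) ∩ V, Amap z ⊆ U)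
    -- weak measurability of `x ↦ A(x)` on `K ∖ O`
    (hAwm : ∀ G : Set A, IsOpen G → MeasurableSet {x | x ∈ K \ O ∧ (Amap x ∩ G).Nonempty})
    (Q : X → A → Measure X)
    (hQprob : ∀ x ∈ K \ O, ∀ a ∈ Amap x, IsProbabilityMeasure (Q x a))
    (hQmeas : ∀ B : Set X, MeasurableSet B →
      Measurable fun p : {p : X × A // p.1 ∈ K \ O ∧ p.2 ∈ Amap p.1} => Q p.1.1 p.1.2 B)
    -- strong Feller property of `Q` on `𝕂`
    (hQfeller : ∀ g : X → ℝ, Measurable g → (∃ C, ∀ y, |g y| ≤ C) →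
      ContinuousOn (fun p : X × A => ∫ y, g y ∂(Q p.1 p.2))
        {p : X × A | p.1 ∈ K \ O ∧ p.2 ∈ Amap p.1})
    -- a measurable selector `g` on `K ∖ O`
    (g : X → A) (hgmeas : Measurable ((K \ O).restrict g))
    (hgsel : ∀ x ∈ K \ O, g x ∈ Amap x)
    -- `P x` is the law of the Markov chain driven by the kernel `κ_g`
    (P : X → Measure (ℕ → X))
    (hP : IsMarkovChainLaw
      (fun x => if x ∈ K \ O then Q x (g x) else Measure.dirac x) P)
    -- `vstar` is the pointwise limit of the value-iteration functions
    (vstar : X → ℝ)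
    (hvstar : ∀ x, Filter.Tendsto (fun n => viter O K Amap Q n x) Filter.atTop (nhds (vstar x))) :
    ∀ x, P x {ω | hitTime O ω < hitTime Kᶜ ω ∧ hitTime O ω < ⊤} ≤
      ENNReal.ofReal (vstar x) :=
  stmt6_general O K hmO hmK hOK Amap hAne hAcp hAuh Q hQprob hQfeller g hgsel P hP vstar hvstar
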